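/- arXiv:1704.00951 — 3 statements merged into one kernel-verified Lean document; each statement's English description precedes it below -/
import Mathlib

section
/- For ζ₀ ∈ ℂ with η₀ = Im ζ₀ < 0 and h > 0, the following chain of inequalities holds: |1 − iζ₀h|² ≤ −2η₀h / log|(1+iζ₀h)/(1−iζ₀h)| ≤ |1 + iζ₀h|². -/
/-!
Writing `t = i ζ₀ h`, one has `‖1 + t‖² - ‖1 - t‖² = 4 Re t = -4 η₀ h > 0`, so the middle term is the
logarithmic mean `(A - B) / log (A / B)` of `A = ‖1 + t‖²` and `B = ‖1 - t‖²`, and the logarithmic mean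
of two numbers lies between them by `1 - x⁻¹ ≤ log x ≤ x - 1`.
-/

/-- At `b = 0` the quotient is the junk value `0` (as `Real.log 0 = 0`), which still lies in `[0, a]`;
this covers the case `1 - i ζ₀ h = 0` of the theorem. -/
theorem sub_div_log_div_mem_Icc {a b : ℝ} (hb : 0 ≤ b) (hab : b < a) :
    (a - b) / Real.log (a / b) ∈ Set.Icc b a := by
  obtain rfl | hb := hb.eq_or_lt
  · simpa using hab.le
  have ha : 0 < a := hb.trans hab
  have hlog : 0 < Real.log (a / b) := Real.log_pos ((one_lt_div hb).2 hab)
  have hab' : 0 < a / b := div_pos ha hb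
  constructor
  · rw [le_div_iff₀ hlog]
    calc b * Real.log (a / b) ≤ b * (a / b - 1) :=
          mul_le_mul_of_nonneg_left (Real.log_le_sub_one_of_pos hab') hb.le
      _ = a - b := by field_simp
  · rw [div_le_iff₀ hlog]
    calc a - b = a * (1 - (a / b)⁻¹) := by field_simp
      _ ≤ a * Real.log (a / b) :=
          mul_le_mul_of_nonneg_left (Real.one_sub_inv_le_log_of_pos hab') ha.le

theorem Complex.norm_one_add_sq_sub_norm_one_sub_sq (z : ℂ) :
    ‖1 + z‖ ^ 2 - ‖1 - z‖ ^ 2 = 4 * z.re := by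
  simp only [Complex.sq_norm, Complex.normSq_add, Complex.normSq_sub, map_one, one_mul,
    Complex.conj_re]
  ring

theorem log_ratio_bounds (ζ₀ : ℂ) (hζ : ζ₀.im < 0) (h : ℝ) (hh : 0 < h) :
    ‖(1 - Complex.I * ζ₀ * h : ℂ)‖ ^ 2
      ≤ (-2 * ζ₀.im * h)
          / Real.log ‖((1 + Complex.I * ζ₀ * h) / (1 - Complex.I * ζ₀ * h) : ℂ)‖
    ∧ (-2 * ζ₀.im * h)
          / Real.log ‖((1 + Complex.I * ζ₀ * h) / (1 - Complex.I * ζ₀ * h) : ℂ)‖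
      ≤ ‖(1 + Complex.I * ζ₀ * h : ℂ)‖ ^ 2 := by
  set t : ℂ := Complex.I * ζ₀ * h
  have hdiff : ‖1 + t‖ ^ 2 - ‖1 - t‖ ^ 2 = -4 * ζ₀.im * h := by
    rw [Complex.norm_one_add_sq_sub_norm_one_sub_sq, show t.re = -ζ₀.im * h by simp [t]]
    ring
  have hlt : ‖1 - t‖ ^ 2 < ‖1 + t‖ ^ 2 := by linarith [mul_pos (neg_pos.2 hζ) hh]
  have hmean : -2 * ζ₀.im * h / Real.log ‖(1 + t) / (1 - t)‖
      = (‖1 + t‖ ^ 2 - ‖1 - t‖ ^ 2) / Real.log (‖1 + t‖ ^ 2 / ‖1 - t‖ ^ 2) := by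
    rw [hdiff, ← div_pow, Real.log_pow, norm_div]
    ring
  rw [hmean]
  exact sub_div_log_div_mem_Icc (sq_nonneg _) hlt
end

section
/- Suppose q ∈ L¹([L₁,L₂]) with κ = ‖q‖_{L¹}, and let K be the Volterra integral operator on L^∞([L₁,L₂]; ℂ²) with diagonal kernel K₁(x,y) = r(y)∫_y^x q(z)e^{2iζ(z−y)}dz, K₂(x,y) = q(y)∫_y^x r(z)e^{2iζ(x−z)}dz (zero for y > x), where r = −q* and Im ζ ≥ 0. Then the n-fold composition satisfies ‖K_n‖ ≤ κ^{2n}/(2n)!, and hence the resolvent R = Σ_{n≥1} K_n satisfies ‖R‖ ≤ cosh(κ) − 1. -/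
/-!
Both kernels are dominated by `‖q y‖ * ∫ t in y..x, ‖q t‖`: `r` has the modulus of `q`, and
`Im ζ ≥ 0` together with `y ≤ t ≤ x` makes each exponential of modulus at most one.
For `Q x = ∫ t in L₁..x, ‖q t‖`, the fundamental theorem of calculus for the absolutely
continuous `Q` gives `∫ y in L₁..x, ‖q y‖ (Q x - Q y) Q y ^ m / m! = Q x ^ (m + 2) / (m + 2)!`,
so by induction `‖K^[n] f x‖ ≤ Q x ^ (2n) / (2n)!`. The resolvent is then dominated by the
tail of the series of `cosh κ`.
-/

open MeasureTheory Set Nat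

theorem AbsolutelyContinuousOnInterval.pow_succ {f : ℝ → ℝ} {a b : ℝ}
    (hf : AbsolutelyContinuousOnInterval f a b) (n : ℕ) :
    AbsolutelyContinuousOnInterval (fun x => f x ^ (n + 1)) a b := by
  induction n with
  | zero => simpa using hf
  | succ n ih => simpa only [_root_.pow_succ] using ih.fun_mul hf

section Primitive

variable {g : ℝ → ℝ} {a b : ℝ}

theorem integral_mul_primitive_pow (hg : IntervalIntegrable g volume a b) (k : ℕ) :
    ∫ y in a..b, g y * (∫ t in a..y, g t) ^ k = (∫ t in a..b, g t) ^ (k + 1) / (k + 1) := by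
  set Q : ℝ → ℝ := fun y => ∫ t in a..y, g t
  have hQ : AbsolutelyContinuousOnInterval Q a b :=
    hg.absolutelyContinuousOnInterval_intervalIntegral left_mem_uIcc
  have hderiv : ∀ᵐ y, y ∈ uIoc a b →
      deriv (fun y => (k + 1 : ℝ)⁻¹ * Q y ^ (k + 1)) y = g y * Q y ^ k := by
    filter_upwards [hg.ae_hasDerivAt_integral] with y hy hyab
    have hQy : HasDerivAt Q (g y) y := hy (uIoc_subset_uIcc hyab) a left_mem_uIcc
    rw [((hQy.fun_pow (k + 1)).const_mul (k + 1 : ℝ)⁻¹).deriv]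
    field_simp
    push_cast
    ring
  rw [← intervalIntegral.integral_congr_ae hderiv,
    ((hQ.pow_succ k).const_mul _).integral_deriv_eq_sub]
  simp [Q]
  ring

theorem integral_mul_primitive_sub_mul_pow_div_factorial
    (hg : IntervalIntegrable g volume a b) (n : ℕ) :
    ∫ y in a..b, g y * (((∫ t in a..b, g t) - ∫ t in a..y, g t) * ((∫ t in a..y, g t) ^ n / n !))
      = (∫ t in a..b, g t) ^ (n + 2) / (n + 2)! := by
  set Q : ℝ → ℝ := fun y => ∫ t in a..y, g t
  have hQ : ContinuousOn Q (uIcc a b) :=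
    (hg.absolutelyContinuousOnInterval_intervalIntegral left_mem_uIcc).continuousOn
  have hint (k : ℕ) : IntervalIntegrable (fun y => g y * Q y ^ k) volume a b :=
    hg.mul_continuousOn (hQ.pow k)
  have hsplit : ∀ y, g y * ((Q b - Q y) * (Q y ^ n / n !))
      = Q b / n ! * (g y * Q y ^ n) - (n ! : ℝ)⁻¹ * (g y * Q y ^ (n + 1)) := by
    intro y; ring
  change ∫ y in a..b, g y * ((Q b - Q y) * (Q y ^ n / n !)) = Q b ^ (n + 2) / (n + 2)!
  simp_rw [hsplit]
  rw [intervalIntegral.integral_sub ((hint n).const_mul _) ((hint (n + 1)).const_mul _),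
    intervalIntegral.integral_const_mul, intervalIntegral.integral_const_mul,
    integral_mul_primitive_pow hg, integral_mul_primitive_pow hg]
  rw [Nat.factorial_succ, Nat.factorial_succ]
  push_cast
  field_simp
  ring

theorem norm_integral_mul_le_primitive_pow {K u : ℝ → ℂ} (hab : a ≤ b)
    (hg : IntervalIntegrable g volume a b) (n : ℕ)
    (hK : ∀ y ∈ Icc a b, ‖K y‖ ≤ g y * ((∫ t in a..b, g t) - ∫ t in a..y, g t))
    (hu : ∀ y ∈ Icc a b, ‖u y‖ ≤ (∫ t in a..y, g t) ^ n / n !) :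
    ‖∫ y in a..b, K y * u y‖ ≤ (∫ t in a..b, g t) ^ (n + 2) / (n + 2)! := by
  have hQ : ContinuousOn (fun y => ∫ t in a..y, g t) (uIcc a b) :=
    (hg.absolutelyContinuousOnInterval_intervalIntegral left_mem_uIcc).continuousOn
  rw [← integral_mul_primitive_sub_mul_pow_div_factorial hg]
  refine intervalIntegral.norm_integral_le_of_norm_le hab (ae_of_all _ fun y hy => ?_)
    (hg.mul_continuousOn ((continuousOn_const.sub hQ).mul (hQ.pow n |>.div_const _)))
  have hy' : y ∈ Icc a b := Ioc_subset_Icc_self hy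
  rw [norm_mul, ← mul_assoc]
  exact mul_le_mul (hK y hy') (hu y hy') (norm_nonneg _) ((norm_nonneg _).trans (hK y hy'))

end Primitive

noncomputable def diagVolterra {ι : Type*} (a : ℝ) (K : ι → ℝ → ℝ → ℂ) (f : ℝ → ι → ℂ) :
    ℝ → ι → ℂ :=
  fun x i => ∫ y in a..x, K i x y * f y i

theorem norm_iterate_diagVolterra_le {ι : Type*} [Fintype ι] {K : ι → ℝ → ℝ → ℂ}
    {g : ℝ → ℝ} {a b : ℝ} (hg : IntegrableOn g (Icc a b))
    (hK : ∀ i, ∀ x ∈ Icc a b, ∀ y ∈ Icc a x, ‖K i x y‖ ≤ g y * ∫ t in y..x, g t)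
    {f : ℝ → ι → ℂ} (hf : ∀ x ∈ Icc a b, ‖f x‖ ≤ 1) (n : ℕ) :
    ∀ x ∈ Icc a b, ‖(diagVolterra a K)^[n] f x‖ ≤ (∫ t in a..x, g t) ^ (2 * n) / (2 * n)! := by
  induction n with
  | zero => simpa using hf
  | succ n ih =>
    intro x hx
    have hgI : ∀ y ∈ Icc a b, IntervalIntegrable g volume a y := fun y hy =>
      (hg.mono_set (uIcc_of_le hy.1 ▸ Icc_subset_Icc_right hy.2)).intervalIntegrable
    rw [Function.iterate_succ_apply', pi_norm_le_iff_of_nonneg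
      (div_nonneg ((even_two_mul _).pow_nonneg _) (Nat.cast_nonneg _))]
    intro i
    refine norm_integral_mul_le_primitive_pow hx.1 (hgI x hx) (2 * n) (fun y hy => ?_)
      (fun y hy => (norm_le_pi_norm _ i).trans (ih y ⟨hy.1, hy.2.trans hx.2⟩))
    rw [intervalIntegral.integral_interval_sub_left (hgI x hx) (hgI y ⟨hy.1, hy.2.trans hx.2⟩)]
    exact hK i x hx y hy

theorem Complex.norm_exp_two_I_mul_sub_le_one {ζ : ℂ} (hζ : 0 ≤ ζ.im) {s t : ℝ} (hts : t ≤ s) :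
    ‖Complex.exp (2 * Complex.I * ζ * ((s : ℂ) - (t : ℂ)))‖ ≤ 1 := by
  rw [Complex.norm_exp, Real.exp_le_one_iff]
  simp only [Complex.mul_re, Complex.mul_im, Complex.sub_re, Complex.sub_im, Complex.ofReal_re,
    Complex.ofReal_im, Complex.I_re, Complex.I_im, Complex.re_ofNat, Complex.im_ofNat]
  nlinarith

theorem norm_mul_intervalIntegral_mul_le {c : ℂ} {u e : ℝ → ℂ} {g : ℝ → ℝ} {y x : ℝ}
    (hyx : y ≤ x) (hg : IntervalIntegrable g volume y x) (hu : ∀ t ∈ Ioc y x, ‖u t‖ ≤ g t)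
    (he : ∀ t ∈ Ioc y x, ‖e t‖ ≤ 1) :
    ‖c * ∫ t in y..x, u t * e t‖ ≤ ‖c‖ * ∫ t in y..x, g t := by
  rw [norm_mul]
  refine mul_le_mul_of_nonneg_left (intervalIntegral.norm_integral_le_of_norm_le hyx
    (ae_of_all _ fun t ht => ?_) hg) (norm_nonneg c)
  rw [norm_mul]
  exact (mul_le_of_le_one_right (norm_nonneg _) (he t ht)).trans (hu t ht)

theorem Real.hasSum_cosh_sub_one (x : ℝ) :
    HasSum (fun n => x ^ (2 * (n + 1)) / (2 * (n + 1))!) (Real.cosh x - 1) := by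
  simpa using (hasSum_nat_add_iff' 1).mpr (Real.hasSum_cosh x)

theorem volterra_iterate_and_resolvent_bound (L₁ L₂ : ℝ) (q : ℝ → ℂ) (ζ : ℂ)
    (hζ : 0 ≤ ζ.im) (hq : IntegrableOn q (Set.Icc L₁ L₂)) :
    let r : ℝ → ℂ := fun t => -(starRingEnd ℂ) (q t)
    let κ : ℝ := ∫ x in Set.Icc L₁ L₂, ‖q x‖
    let K1 : ℝ → ℝ → ℂ := fun x y =>
      r y * ∫ t in y..x, q t * Complex.exp (2 * Complex.I * ζ * ((t : ℂ) - (y : ℂ)))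
    let K2 : ℝ → ℝ → ℂ := fun x y =>
      q y * ∫ t in y..x, r t * Complex.exp (2 * Complex.I * ζ * ((x : ℂ) - (t : ℂ)))
    let Kop : (ℝ → Fin 2 → ℂ) → (ℝ → Fin 2 → ℂ) := fun f x =>
      ![∫ y in L₁..x, K1 x y * f y 0, ∫ y in L₁..x, K2 x y * f y 1]
    ∀ f : ℝ → Fin 2 → ℂ, (∀ x ∈ Set.Icc L₁ L₂, ‖f x‖ ≤ 1) →
      (∀ n : ℕ, ∀ x ∈ Set.Icc L₁ L₂,
        ‖(Kop^[n + 1]) f x‖ ≤ κ ^ (2 * (n + 1)) / (Nat.factorial (2 * (n + 1)) : ℝ))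
      ∧ ∀ x ∈ Set.Icc L₁ L₂,
          ‖∑' n : ℕ, (Kop^[n + 1]) f x‖ ≤ Real.cosh κ - 1 := by
  intro r κ K1 K2 Kop f hf
  have hqI : ∀ x ∈ Icc L₁ L₂, ∀ y ∈ Icc L₁ x, IntervalIntegrable q volume y x :=
    fun x hx y hy => (hq.mono_set (uIcc_of_le hy.2 ▸ Icc_subset_Icc hy.1 hx.2)).intervalIntegrable
  have hnorm_r : ∀ t, ‖r t‖ = ‖q t‖ := fun t => by simp [r]
  have hK : ∀ i, ∀ x ∈ Icc L₁ L₂, ∀ y ∈ Icc L₁ x,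
      ‖![K1, K2] i x y‖ ≤ ‖q y‖ * ∫ t in y..x, ‖q t‖ := by
    intro i x hx y hy
    fin_cases i
    · rw [← hnorm_r y]
      exact norm_mul_intervalIntegral_mul_le hy.2 (hqI x hx y hy).norm (fun t _ => le_rfl)
        fun t ht => Complex.norm_exp_two_I_mul_sub_le_one hζ ht.1.le
    · exact norm_mul_intervalIntegral_mul_le hy.2 (hqI x hx y hy).norm
        (fun t _ => (hnorm_r t).le) fun t ht => Complex.norm_exp_two_I_mul_sub_le_one hζ ht.2
  have hKop : Kop = diagVolterra L₁ ![K1, K2] := by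
    funext f x i
    fin_cases i <;> rfl
  have hprimitive : ∀ x ∈ Icc L₁ L₂, 0 ≤ ∫ t in L₁..x, ‖q t‖ ∧ ∫ t in L₁..x, ‖q t‖ ≤ κ := fun x hx =>
    ⟨intervalIntegral.integral_nonneg hx.1 fun _ _ => norm_nonneg _, by
      rw [intervalIntegral.integral_of_le hx.1]
      exact setIntegral_mono_set hq.norm (ae_of_all _ fun _ => norm_nonneg _)
        (Ioc_subset_Icc_self.trans (Icc_subset_Icc_right hx.2)).eventuallyLE⟩
  have hiter : ∀ n, ∀ x ∈ Icc L₁ L₂,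
      ‖(Kop^[n + 1]) f x‖ ≤ κ ^ (2 * (n + 1)) / (Nat.factorial (2 * (n + 1)) : ℝ) := by
    intro n x hx
    rw [hKop]
    refine (norm_iterate_diagVolterra_le hq.norm hK hf (n + 1) x hx).trans ?_
    gcongr
    exacts [(hprimitive x hx).1, (hprimitive x hx).2]
  exact ⟨hiter, fun x hx => tsum_of_norm_bounded (Real.hasSum_cosh_sub_one κ) (hiter · x hx)⟩
end

section
/- If a sequence of transfer matrices determined by vectors A, B ∈ ℂ^N with B₁ = 0 is applied to P₀(z²) = (1,0)ᵀ via P_n = M_n·P_{n−1}, where M_n has the factorized form μ_n·[[1,−A_n*],[A_n,1]]·diag(1,z²)·[[1,−B_n*],[B_n,1]] with μ_n ∈ ℝ₊, then the leading coefficient satisfies P^{(n)}_{1,0} = μ₁·Π_{k=1}^{n−1} μ_{k+1}(1 − A_k B_{k+1}*), and the top-degree coefficient of P_n vanishes: the coefficient of (z²)^n in P_n(z²) is zero for all 1 ≤ n ≤ N. -/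
open Polynomial

/-- The factorized transfer matrix
`μₙ · [[1,−Aₙ*],[Aₙ,1]] · diag(1, z²) · [[1,−Bₙ*],[Bₙ,1]]` as a matrix of
polynomials in the variable `w = z²`. -/
noncomputable def transferMat (A B : ℕ → ℂ) (μ : ℕ → ℝ) (n : ℕ) :
    Matrix (Fin 2) (Fin 2) (Polynomial ℂ) :=
  C ((μ n : ℂ)) •
    (!![C 1, C (-(starRingEnd ℂ) (A n)); C (A n), C 1]
      * !![C 1, 0; 0, X]
      * !![C 1, C (-(starRingEnd ℂ) (B n)); C (B n), C 1])

lemma tm_mulVec0 (A B : ℕ → ℂ) (μ : ℕ → ℝ) (m : ℕ) (v : Fin 2 → Polynomial ℂ) :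
    ((transferMat A B μ m).mulVec v) 0
      = C (μ m : ℂ) * ((C 1 + C (-((starRingEnd ℂ) (A m) * B m)) * X) * v 0
          + (C (-(starRingEnd ℂ) (B m)) + C (-(starRingEnd ℂ) (A m)) * X) * v 1) := by
  simp [transferMat, Matrix.mulVec, Matrix.mul_apply, Fin.sum_univ_two]
  ring

lemma tm_mulVec1 (A B : ℕ → ℂ) (μ : ℕ → ℝ) (m : ℕ) (v : Fin 2 → Polynomial ℂ) :
    ((transferMat A B μ m).mulVec v) 1
      = C (μ m : ℂ) * ((C (A m) + C (B m) * X) * v 0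
          + (C (-(A m * (starRingEnd ℂ) (B m))) + C 1 * X) * v 1) := by
  simp [transferMat, Matrix.mulVec, Matrix.mul_apply, Fin.sum_univ_two]
  ring

lemma coeff_aux0 (a b : ℂ) (p : Polynomial ℂ) :
    ((C a + C b * X) * p).coeff 0 = a * p.coeff 0 := by
  simp [add_mul, mul_assoc, coeff_X_mul]

lemma coeff_auxS (a b : ℂ) (p : Polynomial ℂ) (k : ℕ) :
    ((C a + C b * X) * p).coeff (k + 1) = a * p.coeff (k + 1) + b * p.coeff k := by
  rw [add_mul, mul_assoc]
  simp [coeff_X_mul]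

theorem transfer_recursion_leading_and_top_coefficients (N : ℕ) (hN : 0 < N)
    (A B : ℕ → ℂ) (μ : ℕ → ℝ) (hμ : ∀ n, 0 < μ n) (hB1 : B 1 = 0)
    (P : ℕ → Fin 2 → Polynomial ℂ)
    (hP0 : P 0 = ![1, 0])
    (hrec : ∀ n < N, P (n + 1) = (transferMat A B μ (n + 1)).mulVec (P n)) :
    ∀ n, 1 ≤ n → n ≤ N →
      ((P n 0).coeff 0
          = (μ 1 : ℂ) * ∏ k ∈ Finset.Icc 1 (n - 1),
              ((μ (k + 1) : ℂ) * (1 - A k * (starRingEnd ℂ) (B (k + 1)))))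
      ∧ (P n 0).coeff n = 0 ∧ (P n 1).coeff n = 0 := by
  suffices H : ∀ n, 1 ≤ n → n ≤ N →
      ((P n 0).coeff 0
          = (μ 1 : ℂ) * ∏ k ∈ Finset.Icc 1 (n - 1),
              ((μ (k + 1) : ℂ) * (1 - A k * (starRingEnd ℂ) (B (k + 1)))))
      ∧ ((P n 1).coeff 0 = A n * (P n 0).coeff 0)
      ∧ (∀ k, n ≤ k → (P n 0).coeff k = 0 ∧ (P n 1).coeff k = 0) by
    intro n h1 h2
    obtain ⟨h, -, h3⟩ := H n h1 h2
    exact ⟨h, (h3 n le_rfl).1, (h3 n le_rfl).2⟩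
  intro n
  induction n with
  | zero => omega
  | succ n ih =>
    intro _ hle
    have hr := hrec n (by omega)
    have e0 := congrFun hr 0
    have e1 := congrFun hr 1
    rw [tm_mulVec0] at e0
    rw [tm_mulVec1] at e1
    rcases Nat.eq_zero_or_pos n with rfl | hn
    · -- base case n+1 = 1
      rw [hP0] at e0 e1
      simp only [Matrix.cons_val_zero, Matrix.cons_val_one, Matrix.head_cons] at e0 e1
      refine ⟨?_, ?_, ?_⟩
      · rw [e0]
        simp [hB1, Finset.Icc_eq_empty_of_lt (by norm_num : (0:ℕ) < 1)]
      · rw [e0, e1]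
        simp [hB1, coeff_C_mul]
        ring
      · intro k hk
        obtain ⟨k, rfl⟩ : ∃ k', k = k' + 1 := ⟨k - 1, by omega⟩
        constructor
        · rw [e0, coeff_C_mul, coeff_add, coeff_auxS, coeff_auxS]
          simp [hB1, coeff_one]
        · rw [e1, coeff_C_mul, coeff_add, coeff_auxS, coeff_auxS]
          simp [hB1, coeff_one]
    · -- inductive step
      obtain ⟨h0, h1, htop⟩ := ih hn (by omega)
      have key0 : ∀ k, n ≤ k → (P (n+1) 0).coeff (k+1) = 0 := by
        intro k hk
        rw [e0]
        rw [coeff_C_mul, coeff_add, coeff_auxS, coeff_auxS]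
        rw [(htop k hk).1, (htop k hk).2, (htop (k+1) (by omega)).1,
          (htop (k+1) (by omega)).2]
        ring
      have key1 : ∀ k, n ≤ k → (P (n+1) 1).coeff (k+1) = 0 := by
        intro k hk
        rw [e1]
        rw [coeff_C_mul, coeff_add, coeff_auxS, coeff_auxS]
        rw [(htop k hk).1, (htop k hk).2, (htop (k+1) (by omega)).1,
          (htop (k+1) (by omega)).2]
        ring
      have c0 : (P (n+1) 0).coeff 0
          = (μ (n+1) : ℂ) * (1 - A n * (starRingEnd ℂ) (B (n+1))) * (P n 0).coeff 0 := by
        rw [e0, coeff_C_mul, coeff_add, coeff_aux0, coeff_aux0, h1]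
        ring
      refine ⟨?_, ?_, ?_⟩
      · rw [c0, h0]
        have hIcc : Finset.Icc 1 (n + 1 - 1) = Finset.Icc 1 ((n - 1) + 1) := by
          congr 1; omega
        rw [hIcc, Finset.prod_Icc_succ_top (by omega)]
        have : n - 1 + 1 = n := by omega
        rw [this]
        ring
      · rw [e1, coeff_C_mul, coeff_add, coeff_aux0, coeff_aux0, c0, h1]
        ring
      · intro k hk
        obtain ⟨k', rfl⟩ : ∃ k', k = k' + 1 := ⟨k - 1, by omega⟩
        exact ⟨key0 k' (by omega), key1 k' (by omega)⟩
end
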